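/- If a finitary type theory derives Θ ⊢ Γ ctx and Θ; Γ ⊢ 𝔅[e ≡ e′] for an abstracted object boundary 𝔅 with heads e and e′, then it also derives Θ; Γ ⊢ 𝔅[e′]. -/

import Mathlib

set_option autoImplicit true


namespace FTT
/-! # Finitary type theories (Bauer–Haselwarter–Lumsdaine style)

A raw-syntax formalization following "An extensible equality checking algorithm
for dependent type theories" (Bauer–Komel).  Bound variables are de Bruijn
indices, free variables and metavariables are natural numbers (free variables
index positionally into the variable context). -/

/-- Syntactic classes: types, terms, type equations, term equations. -/
inductive SynClass : Type
  | ty | tm | eqTy | eqTm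
deriving DecidableEq

/-- A signature: a collection of primitive symbols, each with a syntactic class
(type or term former) and an arity assigning to each argument its class and the
number of variables it binds. -/
structure Signature : Type 1 where
  Symbol : Type
  symClass : Symbol → SynClass
  symArity : Symbol → List (SynClass × ℕ)

variable {Sig : Signature}

/-- Raw expressions/arguments: free variables, bound variables, symbol
applications, metavariable applications, the two dummy heads for equations,
and abstraction. -/
inductive Expr (Sig : Signature) : Type
  | fvar (a : ℕ)
  | bvar (i : ℕ)
  | symApp (S : Sig.Symbol) (args : List (Expr Sig))
  | metaApp (M : ℕ) (args : List (Expr Sig))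
  | dummyTy
  | dummyTm
  | abstr (e : Expr Sig)

namespace Expr

/-- Number of leading abstractions (the arity of an argument). -/
def nLam : Expr Sig → ℕ
  | .abstr e => e.nLam + 1
  | _ => 0

/-- Open a bound variable: replace the bound variable at level `k` by `u`. -/
def openE (u : Expr Sig) : ℕ → Expr Sig → Expr Sig
  | k, .bvar i => if i = k then u else .bvar i
  | _, .fvar a => .fvar a
  | k, .symApp S args => .symApp S (args.attach.map (fun ⟨a, _⟩ => openE u k a))
  | k, .metaApp M args => .metaApp M (args.attach.map (fun ⟨a, _⟩ => openE u k a))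
  | _, .dummyTy => .dummyTy
  | _, .dummyTm => .dummyTm
  | k, .abstr e => .abstr (openE u (k+1) e)

/-- Close a free variable: replace the free variable `a` by the bound variable
at level `k`. -/
def closeE (a : ℕ) : ℕ → Expr Sig → Expr Sig
  | k, .fvar b => if b = a then .bvar k else .fvar b
  | _, .bvar i => .bvar i
  | k, .symApp S args => .symApp S (args.attach.map (fun ⟨e, _⟩ => closeE a k e))
  | k, .metaApp M args => .metaApp M (args.attach.map (fun ⟨e, _⟩ => closeE a k e))
  | _, .dummyTy => .dummyTy
  | _, .dummyTm => .dummyTm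
  | k, .abstr e => .abstr (closeE a (k+1) e)

/-- Shift all free variables up by `n` (used to place a variable context after
another one, replacing the paper's named-variable disjointness). -/
def shiftFv (n : ℕ) : Expr Sig → Expr Sig
  | .fvar a => .fvar (a + n)
  | .bvar i => .bvar i
  | .symApp S args => .symApp S (args.attach.map (fun ⟨e, _⟩ => shiftFv n e))
  | .metaApp M args => .metaApp M (args.attach.map (fun ⟨e, _⟩ => shiftFv n e))
  | .dummyTy => .dummyTy
  | .dummyTm => .dummyTm
  | .abstr e => .abstr (shiftFv n e)

/-- Promotion of free variables to (fresh) metavariables: the free variable `a`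
becomes the metavariable `n₀ + a` applied to no arguments. -/
def promoteE (n₀ : ℕ) : Expr Sig → Expr Sig
  | .fvar a => .metaApp (n₀ + a) []
  | .bvar i => .bvar i
  | .symApp S args => .symApp S (args.attach.map (fun ⟨e, _⟩ => promoteE n₀ e))
  | .metaApp M args => .metaApp M (args.attach.map (fun ⟨e, _⟩ => promoteE n₀ e))
  | .dummyTy => .dummyTy
  | .dummyTm => .dummyTm
  | .abstr e => .abstr (promoteE n₀ e)

/-- Apply an abstracted argument to a list of term expressions:
`({x₁}⋯{xₙ} e)[t₁,…,tₙ] = e[t⃗/x⃗]`. -/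
def applyArg : Expr Sig → List (Expr Sig) → Expr Sig
  | e, [] => e
  | .abstr e, t :: ts => applyArg (openE t 0 e) ts
  | e, _ :: _ => e

/-- The set of metavariables occurring in an expression. -/
def mvE : Expr Sig → Set ℕ
  | .metaApp M args => insert M ((args.attach.map (fun ⟨a, _⟩ => mvE a)).foldr (· ∪ ·) ∅)
  | .symApp _ args => (args.attach.map (fun ⟨a, _⟩ => mvE a)).foldr (· ∪ ·) ∅
  | .abstr e => e.mvE
  | _ => ∅

/-- The set of free variables occurring in an expression. -/
def fvE : Expr Sig → Set ℕ
  | .fvar a => {a}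
  | .metaApp _ args => (args.attach.map (fun ⟨a, _⟩ => fvE a)).foldr (· ∪ ·) ∅
  | .symApp _ args => (args.attach.map (fun ⟨a, _⟩ => fvE a)).foldr (· ∪ ·) ∅
  | .abstr e => e.fvE
  | _ => ∅

end Expr

/-- Iterated abstraction. -/
def iterAbstr : ℕ → Expr Sig → Expr Sig
  | 0, e => e
  | n+1, e => .abstr (iterAbstr n e)

/-- The generic application `{x₁ … xₙ} M(x₁, …, xₙ)` of a metavariable. -/
def genAppExpr (M n : ℕ) : Expr Sig :=
  iterAbstr n (.metaApp M ((List.range n).reverse.map .bvar))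

/-- An instantiation (of some metavariable context): a partial map from
metavariable names to arguments. -/
def Inst (Sig : Signature) : Type := ℕ → Option (Expr Sig)

/-- The action of an instantiation on an expression: metavariable applications
`M(t⃗)` with `M` in the domain are replaced by `I(M)` applied to the
(recursively instantiated) arguments. -/
def Expr.instE (I : Inst Sig) : Expr Sig → Expr Sig
  | .fvar a => .fvar a
  | .bvar i => .bvar i
  | .symApp S args => .symApp S (args.attach.map (fun ⟨e, _⟩ => instE I e))
  | .metaApp M args =>
      match I M with
      | some e => e.applyArg (args.attach.map (fun ⟨a, _⟩ => instE I a))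
      | none => .metaApp M (args.attach.map (fun ⟨a, _⟩ => instE I a))
  | .dummyTy => .dummyTy
  | .dummyTm => .dummyTm
  | .abstr e => .abstr (instE I e)

/-- Composition of instantiations: `(K ∘ J)(M) = K(J(M))`. -/
def instComp (K J : Inst Sig) : Inst Sig := fun M => (J M).map (Expr.instE K)
/-! ## Judgements and boundaries -/

/-- Judgement theses. -/
inductive Jdg (Sig : Signature) : Type
  | isTy (A : Expr Sig)
  | isTm (t A : Expr Sig)
  | eqTy (A B : Expr Sig)
  | eqTm (s t A : Expr Sig)

/-- Boundary theses (judgements with a hole `⬜`). -/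
inductive Bdry (Sig : Signature) : Type
  | ty
  | tm (A : Expr Sig)
  | eqTy (A B : Expr Sig)
  | eqTm (s t A : Expr Sig)

/-- Abstracted judgements. -/
inductive AbJdg (Sig : Signature) : Type
  | thesis (j : Jdg Sig)
  | abstr (A : Expr Sig) (J : AbJdg Sig)

/-- Abstracted boundaries. -/
inductive AbBdry (Sig : Signature) : Type
  | thesis (b : Bdry Sig)
  | abstr (A : Expr Sig) (B : AbBdry Sig)

variable {Sig : Signature}

namespace Jdg
/-- Whether a judgement thesis is an object judgement. -/
def isObj : Jdg Sig → Bool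
  | .isTy _ => true | .isTm _ _ => true | _ => false
/-- The boundary of a judgement thesis. -/
def boundaryOf : Jdg Sig → Bdry Sig
  | .isTy _ => .ty
  | .isTm _ A => .tm A
  | .eqTy A B => .eqTy A B
  | .eqTm s t A => .eqTm s t A
/-- The head of a judgement thesis (the dummy for equations). -/
def headOf : Jdg Sig → Expr Sig
  | .isTy A => A
  | .isTm t _ => t
  | .eqTy _ _ => .dummyTy
  | .eqTm _ _ _ => .dummyTm
def openJ (u : Expr Sig) (k : ℕ) : Jdg Sig → Jdg Sig
  | .isTy A => .isTy ((Expr.openE u k A))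
  | .isTm t A => .isTm ((Expr.openE u k t)) ((Expr.openE u k A))
  | .eqTy A B => .eqTy ((Expr.openE u k A)) ((Expr.openE u k B))
  | .eqTm s t A => .eqTm ((Expr.openE u k s)) ((Expr.openE u k t)) ((Expr.openE u k A))
def instJ (I : Inst Sig) : Jdg Sig → Jdg Sig
  | .isTy A => .isTy (A.instE I)
  | .isTm t A => .isTm (t.instE I) (A.instE I)
  | .eqTy A B => .eqTy (A.instE I) (B.instE I)
  | .eqTm s t A => .eqTm (s.instE I) (t.instE I) (A.instE I)
end Jdg

namespace Bdry
/-- Whether a boundary thesis is an object boundary. -/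
def isObj : Bdry Sig → Bool
  | .ty => true | .tm _ => true | _ => false
/-- The syntactic class of a boundary thesis. -/
def cls : Bdry Sig → SynClass
  | .ty => .ty | .tm _ => .tm | .eqTy _ _ => .eqTy | .eqTm _ _ _ => .eqTm
/-- Plug a head into a boundary thesis. -/
def plug : Bdry Sig → Expr Sig → Jdg Sig
  | .ty, A => .isTy A
  | .tm A, t => .isTm t A
  | .eqTy A B, _ => .eqTy A B
  | .eqTm s t A, _ => .eqTm s t A
/-- Turn an object boundary thesis into an equation between two heads. -/
def plugEq : Bdry Sig → Expr Sig → Expr Sig → Jdg Sig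
  | .ty, A, B => .eqTy A B
  | .tm A, s, t => .eqTm s t A
  | .eqTy A B, _, _ => .eqTy A B
  | .eqTm s t A, _, _ => .eqTm s t A
def openB (u : Expr Sig) (k : ℕ) : Bdry Sig → Bdry Sig
  | .ty => .ty
  | .tm A => .tm ((Expr.openE u k A))
  | .eqTy A B => .eqTy ((Expr.openE u k A)) ((Expr.openE u k B))
  | .eqTm s t A => .eqTm ((Expr.openE u k s)) ((Expr.openE u k t)) ((Expr.openE u k A))
def instB (I : Inst Sig) : Bdry Sig → Bdry Sig
  | .ty => .ty
  | .tm A => .tm (A.instE I)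
  | .eqTy A B => .eqTy (A.instE I) (B.instE I)
  | .eqTm s t A => .eqTm (s.instE I) (t.instE I) (A.instE I)
/-- Metavariables of a boundary thesis. -/
def mvB : Bdry Sig → Set ℕ
  | .ty => ∅
  | .tm A => A.mvE
  | .eqTy A B => A.mvE ∪ B.mvE
  | .eqTm s t A => s.mvE ∪ t.mvE ∪ A.mvE
/-- Free variables of a boundary thesis. -/
def fvB : Bdry Sig → Set ℕ
  | .ty => ∅
  | .tm A => A.fvE
  | .eqTy A B => A.fvE ∪ B.fvE
  | .eqTm s t A => s.fvE ∪ t.fvE ∪ A.fvE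
end Bdry

/-- Strip one leading abstraction from an expression (used when plugging an
abstracted head into an abstracted boundary). -/
def Expr.body : Expr Sig → Expr Sig
  | .abstr e => e
  | e => e

namespace AbJdg
def openAJ (u : Expr Sig) : ℕ → AbJdg Sig → AbJdg Sig
  | k, .thesis j => .thesis (j.openJ u k)
  | k, .abstr A J => .abstr ((Expr.openE u k A)) (openAJ u (k+1) J)
def instAJ (I : Inst Sig) : AbJdg Sig → AbJdg Sig
  | .thesis j => .thesis (j.instJ I)
  | .abstr A J => .abstr (A.instE I) (instAJ I J)
end AbJdg

namespace AbBdry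
/-- Number of abstractions. -/
def nAbs : AbBdry Sig → ℕ
  | .thesis _ => 0
  | .abstr _ B => B.nAbs + 1
/-- The boundary thesis under the abstractions. -/
def coreB : AbBdry Sig → Bdry Sig
  | .thesis b => b
  | .abstr _ B => B.coreB
def cls (B : AbBdry Sig) : SynClass := B.coreB.cls
def isObj (B : AbBdry Sig) : Bool := B.coreB.isObj
def openAB (u : Expr Sig) : ℕ → AbBdry Sig → AbBdry Sig
  | k, .thesis b => .thesis (b.openB u k)
  | k, .abstr A B => .abstr ((Expr.openE u k A)) (openAB u (k+1) B)
def instAB (I : Inst Sig) : AbBdry Sig → AbBdry Sig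
  | .thesis b => .thesis (b.instB I)
  | .abstr A B => .abstr (A.instE I) (instAB I B)
/-- Plug a (suitably abstracted) head into an abstracted boundary. -/
def plug : AbBdry Sig → Expr Sig → AbJdg Sig
  | .thesis b, e => .thesis (b.plug e)
  | .abstr A B, e => .abstr A (B.plug e.body)
/-- Turn an (object) abstracted boundary into an equation between two heads. -/
def plugEq : AbBdry Sig → Expr Sig → Expr Sig → AbJdg Sig
  | .thesis b, e, e' => .thesis (b.plugEq e e')
  | .abstr A B, e, e' => .abstr A (B.plugEq e.body e'.body)
/-- Open an abstracted boundary with a list of terms, one per abstraction: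
`({x⃗} 𝔟)[t⃗/x⃗]`. -/
def openWith : AbBdry Sig → List (Expr Sig) → Bdry Sig
  | .thesis b, _ => b
  | .abstr _ B, [] => B.coreB
  | .abstr _ B, t :: ts => (B.openAB t 0).openWith ts
/-- The type of the `j`-th abstracted variable, with the previous variables
substituted by the corresponding entries of `ts`:  `Aⱼ[t↾j/x↾j]`. -/
def argType : AbBdry Sig → List (Expr Sig) → ℕ → Expr Sig
  | .abstr A _, _, 0 => A
  | .abstr _ B, t :: ts, j+1 => (B.openAB t 0).argType ts j
  | _, _, _ => .dummyTm
/-- The generic head for a premise `M : 𝔅`: the generic application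
`{x⃗} M(x⃗)` for an object boundary, `{x⃗}★` for an equational one. -/
def genHead (B : AbBdry Sig) (M : ℕ) : Expr Sig :=
  if B.isObj then genAppExpr M B.nAbs
  else iterAbstr B.nAbs (if B.cls = .eqTy then .dummyTy else .dummyTm)
/-- The dummy head `{x⃗}★` of an (equational) abstracted boundary. -/
def dummyHead (B : AbBdry Sig) : Expr Sig :=
  iterAbstr B.nAbs (if B.cls = .eqTy then .dummyTy else .dummyTm)
/-- Read an equational abstracted boundary `{x⃗}(e ≡ e′ by ⬜)` as an object
boundary together with its two sides `({x⃗}𝔟, {x⃗}e, {x⃗}e′)`, as used when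
equational premises are discharged by the equality checking relation `∼`. -/
def simTriple : AbBdry Sig → AbBdry Sig × Expr Sig × Expr Sig
  | .thesis (.eqTy A B) => (.thesis .ty, A, B)
  | .thesis (.eqTm s t A) => (.thesis (.tm A), s, t)
  | .thesis b => (.thesis b, .dummyTm, .dummyTm)
  | .abstr A B =>
      let p := B.simTriple
      (.abstr A p.1, .abstr p.2.1, .abstr p.2.2)
/-- Metavariables of an abstracted boundary. -/
def mvAB : AbBdry Sig → Set ℕ
  | .thesis b => b.mvB
  | .abstr A B => A.mvE ∪ B.mvAB
/-- Free variables of an abstracted boundary. -/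
def fvAB : AbBdry Sig → Set ℕ
  | .thesis b => b.fvB
  | .abstr A B => A.fvE ∪ B.fvAB
end AbBdry

def Expr.shiftFvE := @Expr.shiftFv
/-- Shift the free variables of an abstracted boundary. -/
def AbBdry.shiftFvAB (n : ℕ) : AbBdry Sig → AbBdry Sig
  | .thesis .ty => .thesis .ty
  | .thesis (.tm A) => .thesis (.tm (A.shiftFv n))
  | .thesis (.eqTy A B) => .thesis (.eqTy (A.shiftFv n) (B.shiftFv n))
  | .thesis (.eqTm s t A) => .thesis (.eqTm (s.shiftFv n) (t.shiftFv n) (A.shiftFv n))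
  | .abstr A B => .abstr (A.shiftFv n) (B.shiftFvAB n)
/-! ## Contexts, rules, and the deductive system -/

/-- A metavariable context: a list of named premises. -/
abbrev MCtx (Sig : Signature) : Type := List (ℕ × AbBdry Sig)

/-- A variable context: a list of types (free variable `a` refers to the
`a`-th entry). -/
abbrev VCtx (Sig : Signature) : Type := List (Expr Sig)

/-- The names `|Θ|` of a metavariable context. -/
def MCtx.names (Θ : MCtx Sig) : List ℕ := Θ.map Prod.fst

/-- The object metavariables of a metavariable context. -/
def MCtx.objmv (Θ : MCtx Sig) : Set ℕ :=
  {M | ∃ B : AbBdry Sig, (M, B) ∈ Θ ∧ B.isObj = true}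

/-- `I` is an instantiation of the metavariable context `Ξ`: its domain is
exactly `|Ξ|` and the assigned arguments have the arities of the
corresponding boundaries. -/
def IsInstOf (I : Inst Sig) (Ξ : MCtx Sig) : Prop :=
  (∀ M, (I M).isSome ↔ M ∈ Ξ.names) ∧
  (∀ M (B : AbBdry Sig) e, List.lookup M Ξ = some B → I M = some e → e.nLam = B.nAbs)

/-- The restriction `I↾i` of an instantiation of `Ξ` to the first `i`
premises of `Ξ`. -/
def instUpTo (I : Inst Sig) (Ξ : MCtx Sig) (i : ℕ) : Inst Sig :=
  fun M => if M ∈ MCtx.names (Ξ.take i) then I M else none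

/-- The instantiation `⟨M₁ ↦ e₁, …, Mₙ ↦ eₙ⟩` determined by a list of names
and a list of arguments. -/
def listInst (ns : List ℕ) (es : List (Expr Sig)) : Inst Sig :=
  fun M => (ns.zip es).lookup M

/-- A raw rule `Ξ ⟹ 𝔧`: a metavariable context of premises together with a
conclusion judgement thesis (a hypothetical judgement over the empty variable
context). -/
structure RawRule (Sig : Signature) : Type where
  mctx : MCtx Sig
  concl : Jdg Sig

/-- A raw type theory: a family of raw rules, its specific rules. -/
structure RawTT (Sig : Signature) : Type 1 where
  rules : Set (RawRule Sig)

section Deriv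

variable (T : RawTT Sig)

mutual
/-- Derivability of hypothetical judgements `Θ; Γ ⊢ 𝒥` in the deductive
system associated with a raw type theory: structural rules (variable,
metavariable, abstraction, equality), instantiations of the specific rules,
and instantiations of the congruence rules associated with the specific
object rules. -/
inductive Deriv : MCtx Sig → VCtx Sig → AbJdg Sig → Prop where
  /-- TT-Var -/
  | var {Θ : MCtx Sig} {Γ : VCtx Sig} {a : ℕ} {A : Expr Sig} :
      Γ[a]? = some A →
      Deriv Θ Γ (.thesis (.isTm (.fvar a) A))
  /-- TT-Meta -/
  | meta' {Θ : MCtx Sig} {Γ : VCtx Sig} {M : ℕ} {B : AbBdry Sig} {ts : List (Expr Sig)} :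
      List.lookup M Θ = some B →
      ts.length = B.nAbs →
      (∀ j, j < ts.length →
        Deriv Θ Γ (.thesis (.isTm (ts.getD j .dummyTm) (B.argType ts j)))) →
      DerivB Θ Γ (.thesis (B.openWith ts)) →
      Deriv Θ Γ (.thesis ((B.openWith ts).plug (.metaApp M ts)))
  /-- TT-Meta-Congr -/
  | metaCongr {Θ : MCtx Sig} {Γ : VCtx Sig} {M : ℕ} {B : AbBdry Sig}
      {ss ts : List (Expr Sig)} :
      List.lookup M Θ = some B →
      B.isObj = true →
      ss.length = B.nAbs → ts.length = B.nAbs →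
      (∀ j, j < ss.length →
        Deriv Θ Γ (.thesis (.isTm (ss.getD j .dummyTm) (B.argType ss j)))) →
      (∀ j, j < ts.length →
        Deriv Θ Γ (.thesis (.isTm (ts.getD j .dummyTm) (B.argType ts j)))) →
      (∀ j, j < ss.length →
        Deriv Θ Γ (.thesis (.eqTm (ss.getD j .dummyTm) (ts.getD j .dummyTm) (B.argType ss j)))) →
      (∀ C C' : Expr Sig, B.openWith ss = .tm C → B.openWith ts = .tm C' →
        Deriv Θ Γ (.thesis (.eqTy C C'))) →
      Deriv Θ Γ (.thesis ((B.openWith ss).plugEq (.metaApp M ss) (.metaApp M ts)))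
  /-- TT-Abstr -/
  | abstr {Θ : MCtx Sig} {Γ : VCtx Sig} {A : Expr Sig} {J : AbJdg Sig} :
      Deriv Θ Γ (.thesis (.isTy A)) →
      Deriv Θ (Γ ++ [A]) (J.openAJ (.fvar Γ.length) 0) →
      Deriv Θ Γ (.abstr A J)
  /-- TT-Ty-Refl -/
  | tyRefl {Θ Γ} {A : Expr Sig} :
      Deriv Θ Γ (.thesis (.isTy A)) → Deriv Θ Γ (.thesis (.eqTy A A))
  /-- TT-Ty-Sym -/
  | tySym {Θ Γ} {A B : Expr Sig} :
      Deriv Θ Γ (.thesis (.eqTy A B)) → Deriv Θ Γ (.thesis (.eqTy B A))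
  /-- TT-Ty-Tran -/
  | tyTran {Θ Γ} {A B C : Expr Sig} :
      Deriv Θ Γ (.thesis (.eqTy A B)) → Deriv Θ Γ (.thesis (.eqTy B C)) →
      Deriv Θ Γ (.thesis (.eqTy A C))
  /-- TT-Tm-Refl -/
  | tmRefl {Θ Γ} {t A : Expr Sig} :
      Deriv Θ Γ (.thesis (.isTm t A)) → Deriv Θ Γ (.thesis (.eqTm t t A))
  /-- TT-Tm-Sym -/
  | tmSym {Θ Γ} {s t A : Expr Sig} :
      Deriv Θ Γ (.thesis (.eqTm s t A)) → Deriv Θ Γ (.thesis (.eqTm t s A))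
  /-- TT-Tm-Tran -/
  | tmTran {Θ Γ} {s t u A : Expr Sig} :
      Deriv Θ Γ (.thesis (.eqTm s t A)) → Deriv Θ Γ (.thesis (.eqTm t u A)) →
      Deriv Θ Γ (.thesis (.eqTm s u A))
  /-- TT-Conv-Tm -/
  | convTm {Θ Γ} {t A B : Expr Sig} :
      Deriv Θ Γ (.thesis (.isTm t A)) → Deriv Θ Γ (.thesis (.eqTy A B)) →
      Deriv Θ Γ (.thesis (.isTm t B))
  /-- TT-Conv-Eq -/
  | convEq {Θ Γ} {s t A B : Expr Sig} :
      Deriv Θ Γ (.thesis (.eqTm s t A)) → Deriv Θ Γ (.thesis (.eqTy A B)) →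
      Deriv Θ Γ (.thesis (.eqTm s t B))
  /-- Instantiation of a specific rule of the theory. -/
  | specific {Θ : MCtx Sig} {Γ : VCtx Sig} {R : RawRule Sig} {I : Inst Sig} :
      R ∈ T.rules →
      IsInstOf I R.mctx →
      (∀ i, (h : i < R.mctx.length) → ∀ e, I (R.mctx.get ⟨i, h⟩).1 = some e →
          Deriv Θ Γ (((R.mctx.get ⟨i, h⟩).2.instAB (instUpTo I R.mctx i)).plug e)) →
      DerivB Θ Γ (.thesis (R.concl.boundaryOf.instB I)) →
      Deriv Θ Γ (.thesis (R.concl.instJ I))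
  /-- Instantiation of the congruence rule associated with a specific object
  rule of the theory. -/
  | congr {Θ : MCtx Sig} {Γ : VCtx Sig} {R : RawRule Sig} {I J : Inst Sig} :
      R ∈ T.rules →
      R.concl.isObj = true →
      IsInstOf I R.mctx → IsInstOf J R.mctx →
      (∀ i, (h : i < R.mctx.length) → ∀ e, I (R.mctx.get ⟨i, h⟩).1 = some e →
          Deriv Θ Γ (((R.mctx.get ⟨i, h⟩).2.instAB (instUpTo I R.mctx i)).plug e)) →
      (∀ i, (h : i < R.mctx.length) → ∀ e, J (R.mctx.get ⟨i, h⟩).1 = some e →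
          Deriv Θ Γ (((R.mctx.get ⟨i, h⟩).2.instAB (instUpTo J R.mctx i)).plug e)) →
      (∀ i, (h : i < R.mctx.length) → (R.mctx.get ⟨i, h⟩).2.isObj = true →
        ∀ e f, I (R.mctx.get ⟨i, h⟩).1 = some e → J (R.mctx.get ⟨i, h⟩).1 = some f →
          Deriv Θ Γ (((R.mctx.get ⟨i, h⟩).2.instAB (instUpTo I R.mctx i)).plugEq e f)) →
      (∀ t B : Expr Sig, R.concl = .isTm t B →
        Deriv Θ Γ (.thesis (.eqTy (B.instE I) (B.instE J)))) →
      Deriv Θ Γ (.thesis ((R.concl.boundaryOf.instB I).plugEq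
        (R.concl.headOf.instE I) (R.concl.headOf.instE J)))

/-- Well-formedness of hypothetical boundaries `Θ; Γ ⊢ 𝔅`. -/
inductive DerivB : MCtx Sig → VCtx Sig → AbBdry Sig → Prop where
  /-- TT-Bdry-Ty -/
  | ty {Θ Γ} : DerivB Θ Γ (.thesis .ty)
  /-- TT-Bdry-Tm -/
  | tm {Θ Γ} {A : Expr Sig} :
      Deriv Θ Γ (.thesis (.isTy A)) → DerivB Θ Γ (.thesis (.tm A))
  /-- TT-Bdry-EqTy -/
  | eqTy {Θ Γ} {A B : Expr Sig} :
      Deriv Θ Γ (.thesis (.isTy A)) → Deriv Θ Γ (.thesis (.isTy B)) →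
      DerivB Θ Γ (.thesis (.eqTy A B))
  /-- TT-Bdry-EqTm -/
  | eqTm {Θ Γ} {s t A : Expr Sig} :
      Deriv Θ Γ (.thesis (.isTy A)) →
      Deriv Θ Γ (.thesis (.isTm s A)) → Deriv Θ Γ (.thesis (.isTm t A)) →
      DerivB Θ Γ (.thesis (.eqTm s t A))
  /-- TT-Bdry-Abstr -/
  | abstr {Θ Γ} {A : Expr Sig} {B : AbBdry Sig} :
      Deriv Θ Γ (.thesis (.isTy A)) →
      DerivB Θ (Γ ++ [A]) (B.openAB (.fvar Γ.length) 0) →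
      DerivB Θ Γ (.abstr A B)
end

end Deriv
/-! ## Derived notions: well-formed contexts, derivable instantiations,
determinism, object-invertibility, finitary and standard theories -/

variable (T : RawTT Sig)

/-- `⊢ Θ mctx`: the names are distinct and each boundary is closed and
derivable over the preceding entries. -/
def DerivMCtx (Θ : MCtx Sig) : Prop :=
  Θ.names.Nodup ∧
  ∀ i, (h : i < Θ.length) →
    (Θ.get ⟨i, h⟩).2.fvAB = ∅ ∧ DerivB T (Θ.take i) [] (Θ.get ⟨i, h⟩).2

/-- `Θ ⊢ Γ ctx`: the metavariable context is well formed and each type in `Γ`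
is derivable over the preceding entries. -/
def DerivVCtx (Θ : MCtx Sig) (Γ : VCtx Sig) : Prop :=
  DerivMCtx T Θ ∧
  ∀ i, (h : i < Γ.length) →
    Deriv T Θ (Γ.take i) (.thesis (.isTy (Γ.get ⟨i, h⟩)))

/-- Derivability of an instantiation `I` of `Ξ` over `Θ; Γ`:
`Θ; Γ ⊢ ((I↾i)𝔅ᵢ)[eᵢ]` for every premise. -/
def InstDerivable (Ξ : MCtx Sig) (I : Inst Sig) (Θ : MCtx Sig) (Γ : VCtx Sig) : Prop :=
  ∀ i, (h : i < Ξ.length) →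
    ∃ e, I (Ξ.get ⟨i, h⟩).1 = some e ∧
      Deriv T Θ Γ (((Ξ.get ⟨i, h⟩).2.instAB (instUpTo I Ξ i)).plug e)

/-- Judgemental equality of two instantiations of `Ξ` over `Θ; Γ`:
`Θ; Γ ⊢ ((I↾i)𝔅ᵢ)[eᵢ ≡ fᵢ]` for every object premise. -/
def InstsJdgEqual (Ξ : MCtx Sig) (I J : Inst Sig) (Θ : MCtx Sig) (Γ : VCtx Sig) : Prop :=
  ∀ i, (h : i < Ξ.length) → (Ξ.get ⟨i, h⟩).2.isObj = true →
    ∃ e f, I (Ξ.get ⟨i, h⟩).1 = some e ∧ J (Ξ.get ⟨i, h⟩).1 = some f ∧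
      Deriv T Θ Γ (((Ξ.get ⟨i, h⟩).2.instAB (instUpTo I Ξ i)).plugEq e f)

/-- A raw rule is deterministic when any two instantiations yielding the same
conclusion agree. -/
def RawRule.Deterministic (R : RawRule Sig) : Prop :=
  ∀ I J : Inst Sig, IsInstOf I R.mctx → IsInstOf J R.mctx →
    R.concl.instJ I = R.concl.instJ J → I = J

/-- The equational residue `Ξ∥I`: `Θ` extended by the equational premises of
`Ξ`, each instantiated by the appropriate restriction of `I`. -/
def residue (Ξ : MCtx Sig) (I : Inst Sig) (Θ : MCtx Sig) : MCtx Sig :=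
  Θ ++ ((Ξ.zipIdx.map Prod.swap).filterMap fun p =>
    if p.2.2.isObj then none else some (p.2.1, p.2.2.instAB (instUpTo I Ξ p.1)))

/-- The residual instantiation `Iʳ` of `Ξ` over `Ξ∥I`: object metavariables
are instantiated as by `I`, equational ones by their generic applications. -/
def residualInst (Ξ : MCtx Sig) (I : Inst Sig) : Inst Sig :=
  fun M =>
    match List.lookup M Ξ with
    | none => none
    | some B => if B.isObj then I M else some (B.genHead M)

/-- A (derivable) raw rule `Ξ ⟹ 𝒥` is object-invertible when for every
instantiation `I` of `Ξ` over a well-formed `Θ; []` disjoint from `Ξ` such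
that `Θ; [] ⊢ I𝒥` is derivable, the residual instantiation `Iʳ` is
derivable. -/
def RawRule.ObjectInvertible (R : RawRule Sig) : Prop :=
  ∀ (Θ : MCtx Sig) (I : Inst Sig),
    DerivMCtx T Θ →
    IsInstOf I R.mctx →
    (∀ M ∈ R.mctx.names, M ∉ Θ.names) →
    Deriv T Θ [] (.thesis (R.concl.instJ I)) →
    InstDerivable T R.mctx (residualInst R.mctx I) (residue R.mctx I Θ) []

/-- A raw rule is finitary with respect to `T` when its premises form a
derivable metavariable context and the boundary of its conclusion is
derivable. -/
def RawRule.Finitary (R : RawRule Sig) : Prop :=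
  DerivMCtx T R.mctx ∧ DerivB T R.mctx [] (.thesis R.concl.boundaryOf)

/-- A raw rule is derivable when it is derivable qua hypothetical judgement. -/
def RawRule.Derivable (R : RawRule Sig) : Prop :=
  Deriv T R.mctx [] (.thesis R.concl)

/-- A finitary type theory: all its specific rules are finitary. -/
def RawTT.IsFinitary (T : RawTT Sig) : Prop :=
  ∀ R ∈ T.rules, RawRule.Finitary T R

/-- The symbol rule `M₁:𝔅₁, …, Mₙ:𝔅ₙ ⟹ 𝔟[S(M̂₁, …, M̂ₙ)]` associated with a
symbol `S`, premises `Ξ` and conclusion boundary `b`. -/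
def mkSymbolRule (Ξ : MCtx Sig) (b : Bdry Sig) (S : Sig.Symbol) : RawRule Sig :=
  ⟨Ξ, b.plug (.symApp S (Ξ.map fun p => p.2.genHead p.1))⟩

/-- A standard type theory: a finitary type theory whose specific object rules
are precisely the symbol rules, with exactly one associated rule per symbol. -/
structure StandardTT (Sig : Signature) extends RawTT Sig where
  /-- the premises of the symbol rule of each symbol -/
  symMCtx : Sig.Symbol → MCtx Sig
  /-- the conclusion boundary of the symbol rule of each symbol -/
  symBdry : Sig.Symbol → Bdry Sig
  symBdry_obj : ∀ S, (symBdry S).isObj = true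
  symBdry_cls : ∀ S, (symBdry S).cls = Sig.symClass S
  symArity_eq : ∀ S, Sig.symArity S = (symMCtx S).map fun p => (p.2.cls, p.2.nAbs)
  symbolRule_mem : ∀ S, mkSymbolRule (symMCtx S) (symBdry S) S ∈ rules
  object_rules_are_symbolRules :
    ∀ R ∈ rules, R.concl.isObj = true →
      ∃ S, R = mkSymbolRule (symMCtx S) (symBdry S) S
  finitary : toRawTT.IsFinitary

/-- The natural type `τ(Θ; Γ; t)` of a term expression in a standard type
theory. -/
def naturalType (T : StandardTT Sig) (Θ : MCtx Sig) (Γ : VCtx Sig) : Expr Sig → Expr Sig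
  | .fvar a => Γ.getD a .dummyTm
  | .metaApp M ts =>
      match List.lookup M Θ with
      | some B =>
          match B.openWith ts with
          | .tm A => A
          | _ => .dummyTm
      | none => .dummyTm
  | .symApp S es =>
      match T.symBdry S with
      | .tm B => B.instE (listInst (T.symMCtx S).names es)
      | _ => .dummyTm
  | _ => .dummyTm

/-! ## Patterns -/

/-- Argument patterns: generic applications `{x⃗}M(x⃗)` and symbol
applications of argument patterns with pairwise disjoint metavariables, each
metavariable occurring at most once. -/
inductive IsArgPat : Expr Sig → Prop
  | genApp (M n : ℕ) : IsArgPat (genAppExpr M n)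
  | symApp (S : Sig.Symbol) (args : List (Expr Sig)) :
      (∀ q ∈ args, IsArgPat q) →
      args.Pairwise (fun a b => Disjoint a.mvE b.mvE) →
      IsArgPat (.symApp S args)

/-- Type patterns: `M()` or a symbol application pattern of a type symbol. -/
def IsTyPat (e : Expr Sig) : Prop :=
  (∃ M, e = .metaApp M []) ∨
  (∃ S args, e = .symApp S args ∧ Sig.symClass S = .ty ∧ IsArgPat e)

/-- Term patterns: symbol application patterns of term symbols. -/
def IsTmPat (e : Expr Sig) : Prop :=
  ∃ S args, e = .symApp S args ∧ Sig.symClass S = .tm ∧ IsArgPat e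

/-- Patterns (type or term patterns). -/
def IsPattern (e : Expr Sig) : Prop := IsTyPat e ∨ IsTmPat e

/-- `I` is a matching instantiation of the pattern `p` (over `Ξ`) against the
expression `t`. -/
def Matches (Ξ : MCtx Sig) (p t : Expr Sig) (I : Inst Sig) : Prop :=
  IsInstOf I Ξ ∧ p.instE I = t

/-! ## Judgements natural for variables -/

/-- `Θ; Γ ⊩ 𝒥`: the object judgement is natural for variables, i.e. deducible
typing a variable only by its context type, a metavariable application only by
the (substituted) type of its boundary, and a symbol application only by its
symbol rule with recursively natural object arguments, with no intervening
conversions. -/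
inductive Natural (T : StandardTT Sig) : MCtx Sig → VCtx Sig → AbJdg Sig → Prop
  | var {Θ : MCtx Sig} {Γ : VCtx Sig} {a : ℕ} {A : Expr Sig} :
      Γ[a]? = some A →
      Natural T Θ Γ (.thesis (.isTm (.fvar a) A))
  | abstr {Θ : MCtx Sig} {Γ : VCtx Sig} {A : Expr Sig} {J : AbJdg Sig} :
      Natural T Θ (Γ ++ [A]) (J.openAJ (.fvar Γ.length) 0) →
      Natural T Θ Γ (.abstr A J)
  | metaTy {Θ : MCtx Sig} {Γ : VCtx Sig} {M : ℕ} {B : AbBdry Sig} {ts : List (Expr Sig)} :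
      List.lookup M Θ = some B →
      B.coreB = .ty →
      ts.length = B.nAbs →
      (∀ j, j < ts.length →
        Natural T Θ Γ (.thesis (.isTm (ts.getD j .dummyTm) (B.argType ts j)))) →
      Natural T Θ Γ (.thesis (.isTy (.metaApp M ts)))
  | metaTm {Θ : MCtx Sig} {Γ : VCtx Sig} {M : ℕ} {B : AbBdry Sig}
      {ts : List (Expr Sig)} {C : Expr Sig} :
      List.lookup M Θ = some B →
      ts.length = B.nAbs →
      B.openWith ts = .tm C →
      (∀ j, j < ts.length →
        Natural T Θ Γ (.thesis (.isTm (ts.getD j .dummyTm) (B.argType ts j)))) →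
      Natural T Θ Γ (.thesis (.isTm (.metaApp M ts) C))
  | symApp {Θ : MCtx Sig} {Γ : VCtx Sig} {S : Sig.Symbol} {es : List (Expr Sig)}
      {b : Bdry Sig} :
      es.length = (T.symMCtx S).length →
      (∀ i, (h : i < (T.symMCtx S).length) → ((T.symMCtx S).get ⟨i, h⟩).2.isObj = true →
        Natural T Θ Γ ((((T.symMCtx S).get ⟨i, h⟩).2.instAB
            (instUpTo (listInst (T.symMCtx S).names es) (T.symMCtx S) i)).plug
          (es.getD i .dummyTm))) →
      b.isObj = true →
      Natural T Θ Γ (.thesis (b.plug (.symApp S es)))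
/-! ## Basic instantiations and their composites -/

/-- The basic instantiation `Ξ⟨M ↦ e⟩`: `M` is mapped to `e`, every other
metavariable of `Ξ` to its generic application. -/
def basicInst (Ξ : MCtx Sig) (M₀ : ℕ) (e : Expr Sig) : Inst Sig :=
  fun M =>
    match List.lookup M Ξ with
    | none => none
    | some B => if M = M₀ then some e else some (B.genHead M)

/-- The codomain metavariable context `Ξ∖⟨M ↦ e⟩` of a basic instantiation:
`Ξ` with the entry `M` deleted and the remaining boundaries instantiated by
the appropriate restrictions of the basic instantiation. -/
def basicCod (Ξ : MCtx Sig) (M₀ : ℕ) (e : Expr Sig) : MCtx Sig :=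
  (Ξ.zipIdx.map Prod.swap).filterMap fun p =>
    if p.2.1 = M₀ then none
    else some (p.2.1, p.2.2.instAB (instUpTo (basicInst Ξ M₀ e) Ξ p.1))

/-- One step of the composite basic instantiation: given the current codomain
context and composite instantiation, extend by the metavariable `N` with
value `I(N)`. -/
def compStep (I : Inst Sig) (p : MCtx Sig × Inst Sig) (N : ℕ) : MCtx Sig × Inst Sig :=
  let e := (I N).getD .dummyTm
  (basicCod p.1 N e, instComp (basicInst p.1 N e) p.2)

/-- The composite basic instantiation `I⟨N⃗⟩` of `Ξ` together with its
codomain metavariable context `Ξ⟨N⃗⟩`: starting from the identity-like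
instantiation of `Ξ` over `(Θ, Ξ)`, successively perform the basic
instantiations at `N₁, N₂, …` with values taken from `I`. -/
def compBasic (Ξ Θ : MCtx Sig) (I : Inst Sig) (Ns : List ℕ) : MCtx Sig × Inst Sig :=
  Ns.foldl (compStep I)
    (Θ ++ Ξ, fun M => (List.lookup M Ξ).map fun B => B.genHead M)

/-! ## Computation and extensionality rules -/

/-- A (candidate) computation rule `Ξ ⟹ 𝔟[lhs ≡ rhs]`, where the conclusion
boundary `𝔟` is `⬜ type` or `⬜ : A`. -/
structure CompRule (Sig : Signature) : Type where
  mctx : MCtx Sig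
  bdry : Bdry Sig
  lhs : Expr Sig
  rhs : Expr Sig

/-- The defining conditions for computation rules: a derivable finitary
equality rule such that, for a type computation rule `Ξ ⟹ A ≡ B`, the rule
`Ξ ⟹ A type` is deterministic and object-invertible, and for a term
computation rule `Ξ ⟹ u ≡ v : A`, `u` is a term symbol application and
`Ξ ⟹ u : τ(Ξ; []; u)` is deterministic and object-invertible. -/
def IsCompRule (T : StandardTT Sig) (c : CompRule Sig) : Prop :=
  RawRule.Derivable T.toRawTT ⟨c.mctx, c.bdry.plugEq c.lhs c.rhs⟩ ∧
  RawRule.Finitary T.toRawTT ⟨c.mctx, c.bdry.plugEq c.lhs c.rhs⟩ ∧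
  match c.bdry with
  | .ty =>
      RawRule.Deterministic (⟨c.mctx, .isTy c.lhs⟩ : RawRule Sig) ∧
      RawRule.ObjectInvertible T.toRawTT ⟨c.mctx, .isTy c.lhs⟩
  | .tm _ =>
      (∃ S es, c.lhs = .symApp S es ∧ Sig.symClass S = .tm) ∧
      RawRule.Deterministic
        (⟨c.mctx, .isTm c.lhs (naturalType T c.mctx [] c.lhs)⟩ : RawRule Sig) ∧
      RawRule.ObjectInvertible T.toRawTT
        ⟨c.mctx, .isTm c.lhs (naturalType T c.mctx [] c.lhs)⟩
  | _ => False

/-- A (candidate) extensionality rule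
`Ξ, s : (⬜ : A), t : (⬜ : A), Φ ⟹ s ≡ t : A`. -/
structure ExtRule (Sig : Signature) : Type where
  /-- the premises `Ξ` -/
  mctx : MCtx Sig
  /-- the name of the premise `s` -/
  sN : ℕ
  /-- the name of the premise `t` -/
  tN : ℕ
  /-- the type `A` -/
  ty : Expr Sig
  /-- the equational premises `Φ` -/
  eqPrems : MCtx Sig

/-- The full metavariable context `Ξ, s : (⬜ : A), t : (⬜ : A), Φ` of an
extensionality rule. -/
def ExtRule.fullMCtx (r : ExtRule Sig) : MCtx Sig :=
  r.mctx ++ [(r.sN, .thesis (.tm r.ty)), (r.tN, .thesis (.tm r.ty))] ++ r.eqPrems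

/-- The conclusion `s ≡ t : A` of an extensionality rule. -/
def ExtRule.concl (r : ExtRule Sig) : Jdg Sig :=
  .eqTm (.metaApp r.sN []) (.metaApp r.tN []) r.ty

/-- The defining conditions for extensionality rules: a derivable finitary
rule `Ξ, s : (⬜ : A), t : (⬜ : A), Φ ⟹ s ≡ t : A` such that `Φ` contains
only equational premises and `Ξ ⟹ A type` is deterministic and
object-invertible. -/
def IsExtRule (T : StandardTT Sig) (r : ExtRule Sig) : Prop :=
  RawRule.Derivable T.toRawTT ⟨r.fullMCtx, r.concl⟩ ∧
  RawRule.Finitary T.toRawTT ⟨r.fullMCtx, r.concl⟩ ∧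
  (∀ p ∈ r.eqPrems, (p.2 : AbBdry Sig).isObj = false) ∧
  RawRule.Deterministic (⟨r.mctx, .isTy r.ty⟩ : RawRule Sig) ∧
  RawRule.ObjectInvertible T.toRawTT ⟨r.mctx, .isTy r.ty⟩
/-! ## Normalization and equality checking -/

/-- Extend an instantiation by values for the two distinguished premises `s`
and `t` of an extensionality rule. -/
def extInst (I : Inst Sig) (s t : ℕ) (u v : Expr Sig) : Inst Sig :=
  fun M => if M = s then some u else if M = t then some v else I M

section Algorithm

variable (T : StandardTT Sig) (C : Set (CompRule Sig)) (E : Set (ExtRule Sig))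
  (princ : Sig.Symbol → Set ℕ)

mutual
/-- `Θ; Γ ⊢ 𝔅[e ⇝ e′]`: normalize the argument `e` to `e′` (parametrized by a
standard type theory, a family `𝒞` of computation rules, a family `ℰ` of
extensionality rules used by the intertwined equality checking, and a
selection `℘` of principal arguments). -/
inductive Norm : MCtx Sig → VCtx Sig → AbBdry Sig → Expr Sig → Expr Sig → Prop
  | fvar {Θ Γ} {A : Expr Sig} {a : ℕ} :
      Norm Θ Γ (.thesis (.tm A)) (.fvar a) (.fvar a)
  | dummyTy {Θ Γ} {b : Bdry Sig} :
      Norm Θ Γ (.thesis b) .dummyTy .dummyTy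
  | dummyTm {Θ Γ} {b : Bdry Sig} :
      Norm Θ Γ (.thesis b) .dummyTm .dummyTm
  | abstr {Θ : MCtx Sig} {Γ : VCtx Sig} {A : Expr Sig} {B : AbBdry Sig} {e e' : Expr Sig} :
      Norm Θ (Γ ++ [A]) (B.openAB (.fvar Γ.length) 0)
        (Expr.openE (.fvar Γ.length) 0 e) e' →
      Norm Θ Γ (.abstr A B) (.abstr e) (.abstr (Expr.closeE Γ.length 0 e'))
  | step {Θ Γ} {b : Bdry Sig} {S : Sig.Symbol} {es es' : List (Expr Sig)}
      {e'' e''' : Expr Sig} :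
      NormP Θ Γ b (.symApp S es) (.symApp S es') →
      NormC Θ Γ b (.symApp S es') e'' →
      Norm Θ Γ (.thesis b) e'' e''' →
      Norm Θ Γ (.thesis b) (.symApp S es) e'''
  | nf {Θ Γ} {b : Bdry Sig} {S : Sig.Symbol} {es es' : List (Expr Sig)} :
      NormP Θ Γ b (.symApp S es) (.symApp S es') →
      (∀ c ∈ C, ∀ I : Inst Sig, ¬ Matches c.mctx c.lhs (.symApp S es') I) →
      Norm Θ Γ (.thesis b) (.symApp S es) (.symApp S es')

/-- `Θ; Γ ⊢ 𝔟[S(e⃗) ⇝ₚ S(e⃗′)]`: normalize the principal arguments of the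
symbol `S`, leaving the non-principal ones unchanged. -/
inductive NormP : MCtx Sig → VCtx Sig → Bdry Sig → Expr Sig → Expr Sig → Prop
  | mk {Θ Γ} {b : Bdry Sig} {S : Sig.Symbol} {es es' : List (Expr Sig)} :
      es.length = (T.symMCtx S).length →
      es'.length = es.length →
      (∀ i, (h : i < (T.symMCtx S).length) → i ∈ princ S →
        Norm Θ Γ (((T.symMCtx S).get ⟨i, h⟩).2.instAB
            (instUpTo (listInst (T.symMCtx S).names es) (T.symMCtx S) i))
          (es.getD i .dummyTm) (es'.getD i .dummyTm)) →
      (∀ i, i < es.length → i ∉ princ S → es.getD i .dummyTm = es'.getD i .dummyTm) →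
      NormP Θ Γ b (.symApp S es) (.symApp S es')

/-- `Θ; Γ ⊢ 𝔟[e ⇝꜀ e′]`: rewrite `e` by a computation rule of `𝒞` whose
left-hand side matches `e`, with the equational premises discharged by the
equality checking relation `∼`. -/
inductive NormC : MCtx Sig → VCtx Sig → Bdry Sig → Expr Sig → Expr Sig → Prop
  | mk {Θ Γ} {b : Bdry Sig} {c : CompRule Sig} {s : Expr Sig} {I : Inst Sig} :
      c ∈ C →
      Matches c.mctx c.lhs s I →
      (∀ i, (h : i < c.mctx.length) → (c.mctx.get ⟨i, h⟩).2.isObj = false →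
        Sim Θ Γ ((c.mctx.get ⟨i, h⟩).2.instAB I).simTriple.1
          ((c.mctx.get ⟨i, h⟩).2.instAB I).simTriple.2.1
          ((c.mctx.get ⟨i, h⟩).2.instAB I).simTriple.2.2) →
      NormC Θ Γ b s (c.rhs.instE I)

/-- `Θ; Γ ⊢ 𝔅[e ∼ e′]`: general comparison of two arguments of an object
boundary — descend under abstractions, compare types by normalizing them, and
compare terms extensionally at the normalized type. -/
inductive Sim : MCtx Sig → VCtx Sig → AbBdry Sig → Expr Sig → Expr Sig → Prop
  | abstr {Θ : MCtx Sig} {Γ : VCtx Sig} {A : Expr Sig} {B : AbBdry Sig} {e e' : Expr Sig} :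
      Sim Θ (Γ ++ [A]) (B.openAB (.fvar Γ.length) 0)
        (Expr.openE (.fvar Γ.length) 0 e) (Expr.openE (.fvar Γ.length) 0 e') →
      Sim Θ Γ (.abstr A B) (.abstr e) (.abstr e')
  | ty {Θ Γ} {A A' B B' : Expr Sig} :
      Norm Θ Γ (.thesis .ty) A A' →
      Norm Θ Γ (.thesis .ty) B B' →
      SimN Θ Γ (.thesis .ty) A' B' →
      Sim Θ Γ (.thesis .ty) A B
  | tm {Θ Γ} {A A' u v : Expr Sig} :
      Norm Θ Γ (.thesis .ty) A A' →
      SimE Θ Γ u v A' →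
      Sim Θ Γ (.thesis (.tm A)) u v

/-- `Θ; Γ ⊢ u ∼ₑ v : A`: the type-directed phase — apply a matching
extensionality rule of `ℰ`, or else normalize both sides and compare them
with `∼ₙ`. -/
inductive SimE : MCtx Sig → VCtx Sig → Expr Sig → Expr Sig → Expr Sig → Prop
  | ext {Θ Γ} {r : ExtRule Sig} {A u v : Expr Sig} {I : Inst Sig} :
      r ∈ E →
      Matches r.mctx r.ty A I →
      (∀ i, (h : i < r.mctx.length) → (r.mctx.get ⟨i, h⟩).2.isObj = false →
        Sim Θ Γ ((r.mctx.get ⟨i, h⟩).2.instAB I).simTriple.1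
          ((r.mctx.get ⟨i, h⟩).2.instAB I).simTriple.2.1
          ((r.mctx.get ⟨i, h⟩).2.instAB I).simTriple.2.2) →
      (∀ i, (h : i < r.eqPrems.length) →
        Sim Θ Γ ((r.eqPrems.get ⟨i, h⟩).2.instAB (extInst I r.sN r.tN u v)).simTriple.1
          ((r.eqPrems.get ⟨i, h⟩).2.instAB (extInst I r.sN r.tN u v)).simTriple.2.1
          ((r.eqPrems.get ⟨i, h⟩).2.instAB (extInst I r.sN r.tN u v)).simTriple.2.2) →
      SimE Θ Γ u v A
  | noExt {Θ Γ} {A u u' v v' : Expr Sig} :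
      (∀ r ∈ E, ∀ I : Inst Sig, ¬ Matches r.mctx r.ty A I) →
      Norm Θ Γ (.thesis (.tm A)) u u' →
      Norm Θ Γ (.thesis (.tm A)) v v' →
      SimN Θ Γ (.thesis (.tm A)) u' v' →
      SimE Θ Γ u v A

/-- `Θ; Γ ⊢ 𝔅[e ∼ₙ e′]`: the normalization phase — structural comparison of
normalized expressions, comparing principal arguments with `∼ₙ` and
non-principal ones with `∼`. -/
inductive SimN : MCtx Sig → VCtx Sig → AbBdry Sig → Expr Sig → Expr Sig → Prop
  | fvar {Θ Γ} {A : Expr Sig} {a : ℕ} :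
      SimN Θ Γ (.thesis (.tm A)) (.fvar a) (.fvar a)
  | abstr {Θ : MCtx Sig} {Γ : VCtx Sig} {A : Expr Sig} {B : AbBdry Sig} {e e' : Expr Sig} :
      SimN Θ (Γ ++ [A]) (B.openAB (.fvar Γ.length) 0)
        (Expr.openE (.fvar Γ.length) 0 e) (Expr.openE (.fvar Γ.length) 0 e') →
      SimN Θ Γ (.abstr A B) (.abstr e) (.abstr e')
  | symApp {Θ Γ} {b : Bdry Sig} {S : Sig.Symbol} {es es' : List (Expr Sig)} :
      es.length = (T.symMCtx S).length →
      es'.length = es.length →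
      (∀ i, (h : i < (T.symMCtx S).length) → i ∈ princ S →
        SimN Θ Γ (((T.symMCtx S).get ⟨i, h⟩).2.instAB
            (instUpTo (listInst (T.symMCtx S).names es) (T.symMCtx S) i))
          (es.getD i .dummyTm) (es'.getD i .dummyTm)) →
      (∀ i, (h : i < (T.symMCtx S).length) → i ∉ princ S →
        Sim Θ Γ (((T.symMCtx S).get ⟨i, h⟩).2.instAB
            (instUpTo (listInst (T.symMCtx S).names es) (T.symMCtx S) i))
          (es.getD i .dummyTm) (es'.getD i .dummyTm)) →
      SimN Θ Γ (.thesis b) (.symApp S es) (.symApp S es')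
end

end Algorithm

/-! ## Promotion -/

/-- Promotion of a judgement: the free variables of the variable context are
promoted to fresh metavariables `n₀ + i` with boundaries `⬜ : A′ᵢ`. -/
def promoteMCtx (n₀ : ℕ) (Θ : MCtx Sig) (Γ : VCtx Sig) : MCtx Sig :=
  Θ ++ (Γ.zipIdx.map Prod.swap).map fun p => (n₀ + p.1, .thesis (.tm (p.2.promoteE n₀)))

/-- Promotion of an abstracted judgement: free variables become metavariable
applications. -/
def promoteAJ (n₀ : ℕ) : AbJdg Sig → AbJdg Sig
  | .thesis (.isTy A) => .thesis (.isTy (A.promoteE n₀))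
  | .thesis (.isTm t A) => .thesis (.isTm (t.promoteE n₀) (A.promoteE n₀))
  | .thesis (.eqTy A B) => .thesis (.eqTy (A.promoteE n₀) (B.promoteE n₀))
  | .thesis (.eqTm s t A) =>
      .thesis (.eqTm (s.promoteE n₀) (t.promoteE n₀) (A.promoteE n₀))
  | .abstr A J => .abstr (A.promoteE n₀) (promoteAJ n₀ J)

/-- Metavariables of an abstracted judgement. -/
def AbJdg.mvAJ : AbJdg Sig → Set ℕ
  | .thesis (.isTy A) => A.mvE
  | .thesis (.isTm t A) => t.mvE ∪ A.mvE
  | .thesis (.eqTy A B) => A.mvE ∪ B.mvE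
  | .thesis (.eqTm s t A) => s.mvE ∪ t.mvE ∪ A.mvE
  | .abstr A J => A.mvE ∪ J.mvAJ


/-! Every derivable equation, abstracted or not, has derivable sides; this is proved by induction
on derivations. Rules concluding an equation either carry its boundary as a premise (metavariable
and specific rules), or obtain the sides from those of their equational premises (equality rules),
or, for congruence rules, rebuild them with the corresponding object rule, converting the
right-hand side along the equation between the two types that the rule takes as a premise. -/

section Presuppositivity

variable {Sig : Signature} {T : RawTT Sig}

theorem Bdry.cls_openB (b : Bdry Sig) (u : Expr Sig) (k : ℕ) : (b.openB u k).cls = b.cls := by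
  cases b <;> rfl

theorem AbBdry.cls_coreB_openAB (B : AbBdry Sig) (u : Expr Sig) (k : ℕ) :
    (B.openAB u k).coreB.cls = B.coreB.cls := by
  induction B generalizing k with
  | thesis b => exact b.cls_openB u k
  | abstr A B ih => exact ih (k + 1)

theorem AbBdry.cls_openWith (B : AbBdry Sig) (ts : List (Expr Sig)) :
    (B.openWith ts).cls = B.cls := by
  induction ts generalizing B with
  | nil => cases B <;> rfl
  | cons t ts ih =>
    cases B with
    | thesis b => rfl
    | abstr A B => exact (ih _).trans (B.cls_coreB_openAB t 0)

theorem AbBdry.openWith_cases_of_isObj {B : AbBdry Sig} (hB : B.isObj = true)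
    (ss ts : List (Expr Sig)) :
    (B.openWith ss = .ty ∧ B.openWith ts = .ty) ∨
      ∃ C C', B.openWith ss = .tm C ∧ B.openWith ts = .tm C' := by
  have hss := B.cls_openWith ss
  have hts := B.cls_openWith ts
  unfold AbBdry.cls AbBdry.isObj at *
  revert hB hss hts
  generalize B.openWith ss = b; generalize B.openWith ts = b'; generalize B.coreB = c
  cases b <;> cases b' <;> cases c <;> simp [Bdry.cls, Bdry.isObj]

theorem Jdg.instJ_eq_plug (j : Jdg Sig) (I : Inst Sig) :
    j.instJ I = (j.boundaryOf.instB I).plug (j.headOf.instE I) := by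
  cases j <;> rfl

def AbJdg.eqSides : AbJdg Sig → Option (AbJdg Sig × AbJdg Sig)
  | .thesis (.eqTy A B) => some (.thesis (.isTy A), .thesis (.isTy B))
  | .thesis (.eqTm s t A) => some (.thesis (.isTm s A), .thesis (.isTm t A))
  | .thesis _ => none
  | .abstr A J => J.eqSides.map fun p => (.abstr A p.1, .abstr A p.2)

theorem AbJdg.eqSides_openAJ (J : AbJdg Sig) (u : Expr Sig) (k : ℕ) :
    (J.openAJ u k).eqSides = J.eqSides.map fun p => (p.1.openAJ u k, p.2.openAJ u k) := by
  induction J generalizing k with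
  | thesis j => cases j <;> rfl
  | abstr A J ih =>
    simp only [AbJdg.openAJ, AbJdg.eqSides, ih, Option.map_map]
    rfl

theorem AbBdry.eqSides_plugEq {B : AbBdry Sig} (hB : B.isObj = true) (e e' : Expr Sig) :
    (B.plugEq e e').eqSides = some (B.plug e, B.plug e') := by
  induction B generalizing e e' with
  | thesis b => cases b <;> first | rfl | cases hB
  | abstr A B ih => simp only [AbBdry.plugEq, AbBdry.plug, AbJdg.eqSides, ih hB, Option.map_some]

theorem sides_of_derivB_plug {Θ : MCtx Sig} {Γ : VCtx Sig} {b : Bdry Sig} {e : Expr Sig}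
    {J₁ J₂ : AbJdg Sig} (hb : DerivB T Θ Γ (.thesis b))
    (hs : (AbJdg.thesis (b.plug e)).eqSides = some (J₁, J₂)) :
    Deriv T Θ Γ J₁ ∧ Deriv T Θ Γ J₂ := by
  cases hb with
  | ty | tm => cases hs
  | eqTy hA hB => cases hs; exact ⟨hA, hB⟩
  | eqTm _ hs' ht => cases hs; exact ⟨hs', ht⟩

theorem Deriv.sides_of_eqSides {Θ : MCtx Sig} {Γ : VCtx Sig} {J : AbJdg Sig}
    (h : Deriv T Θ Γ J) {J₁ J₂ : AbJdg Sig} (hs : J.eqSides = some (J₁, J₂)) :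
    Deriv T Θ Γ J₁ ∧ Deriv T Θ Γ J₂ := by
  induction h using Deriv.rec (motive_2 := fun _ _ _ => True) generalizing J₁ J₂ with
  | var => cases hs
  | meta' _ _ _ hB => exact sides_of_derivB_plug hB hs
  | @metaCongr Γ M B ss ts hM hB hss hts hargsS hargsT _ hCC _ _ _ ihCC =>
    have derivS : ∀ b, B.openWith ss = b → DerivB T Θ Γ (.thesis b) →
        Deriv T Θ Γ (.thesis (b.plug (.metaApp M ss))) := by
      rintro b rfl hb; exact .meta' hM hss hargsS hb
    have derivT : ∀ b, B.openWith ts = b → DerivB T Θ Γ (.thesis b) →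
        Deriv T Θ Γ (.thesis (b.plug (.metaApp M ts))) := by
      rintro b rfl hb; exact .meta' hM hts hargsT hb
    rcases B.openWith_cases_of_isObj hB ss ts with ⟨hs', ht'⟩ | ⟨C, C', hs', ht'⟩
    · rw [hs'] at hs; cases hs
      exact ⟨derivS _ hs' .ty, derivT _ ht' .ty⟩
    · rw [hs'] at hs; cases hs
      obtain ⟨hC, hC'⟩ := ihCC C C' hs' ht' rfl
      exact ⟨derivS _ hs' (.tm hC), .convTm (derivT _ ht' (.tm hC')) (.tySym (hCC C C' hs' ht'))⟩
  | abstr hA _ _ ih =>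
    obtain ⟨⟨J₁', J₂'⟩, hs', hJ⟩ := Option.map_eq_some_iff.mp hs
    cases hJ
    obtain ⟨h₁, h₂⟩ := ih (by rw [AbJdg.eqSides_openAJ, hs']; rfl)
    exact ⟨.abstr hA h₁, .abstr hA h₂⟩
  | tyRefl hA => cases hs; exact ⟨hA, hA⟩
  | tySym _ ih => cases hs; exact (ih rfl).symm
  | tyTran _ _ ih₁ ih₂ => cases hs; exact ⟨(ih₁ rfl).1, (ih₂ rfl).2⟩
  | tmRefl ht => cases hs; exact ⟨ht, ht⟩
  | tmSym _ ih => cases hs; exact (ih rfl).symm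
  | tmTran _ _ ih₁ ih₂ => cases hs; exact ⟨(ih₁ rfl).1, (ih₂ rfl).2⟩
  | convTm => cases hs
  | convEq _ hAB ih =>
    cases hs; exact ⟨.convTm (ih rfl).1 hAB, .convTm (ih rfl).2 hAB⟩
  | specific _ _ _ hB =>
    rw [Jdg.instJ_eq_plug] at hs
    exact sides_of_derivB_plug hB hs
  | @congr Γ R I J hR hobj hI hJ hpremI hpremJ _ hty _ _ _ ihty =>
    have derivI := Deriv.specific hR hI hpremI
    have derivJ := Deriv.specific hR hJ hpremJ
    rcases hc : R.concl with A | ⟨t, A⟩ | _ | _ <;> rw [hc] at derivI derivJ hs hobj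
    · cases hs; exact ⟨derivI .ty, derivJ .ty⟩
    · cases hs
      obtain ⟨hAI, hAJ⟩ := ihty t A hc rfl
      exact ⟨derivI (.tm hAI), .convTm (derivJ (.tm hAJ)) (.tySym (hty t A hc))⟩
    all_goals cases hobj
  | _ => trivial

end Presuppositivity

/-- **Lemma 2.24.**  If a finitary type theory derives `Θ ⊢ Γ ctx` and
`Θ; Γ ⊢ 𝔅[e ≡ e′]` for an abstracted object boundary `𝔅` with heads `e` and
`e′`, then it also derives `Θ; Γ ⊢ 𝔅[e′]`. -/
theorem presuppositivity_nested {Sig : Signature} (T : RawTT Sig)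
    (hT : T.IsFinitary)
    (Θ : MCtx Sig) (Γ : VCtx Sig) (B : AbBdry Sig) (e e' : Expr Sig)
    (hobj : B.isObj = true)
    (hctx : DerivVCtx T Θ Γ)
    (h : Deriv T Θ Γ (B.plugEq e e')) :
    Deriv T Θ Γ (B.plug e') :=
  (h.sides_of_eqSides (B.eqSides_plugEq hobj e e')).2

end FTT
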